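/- arXiv:1903.09218 — 3 statements merged into one kernel-verified Lean document; each statement's English description precedes it below -/
import Mathlib

section
/- (Highest weight vectors in P_n.) Let n ≥ 1 and let k be an integer with 0 ≤ k ≤ ⌊n/2⌋. In ℂ[x₁,x₂,x₃], set q_k := (x₁² + x₂² + x₃²)^k · (x₁ + i·x₂)^(n−2k). Then e₊ q_k = 0 and h q_k = 2(n−2k)·q_k. -/
open MvPolynomial

/-- Directional derivative along `f₀ = (x₂, −x₁, 0)`. -/
noncomputable def D0 : Module.End ℂ (MvPolynomial (Fin 3) ℂ) :=
  (LinearMap.mulLeft ℂ (X 1 : MvPolynomial (Fin 3) ℂ)).comp (pderiv 0).toLinearMap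
    - (LinearMap.mulLeft ℂ (X 0 : MvPolynomial (Fin 3) ℂ)).comp (pderiv 1).toLinearMap

/-- Directional derivative along `f₁ = (x₃, 0, −x₁)`. -/
noncomputable def D1 : Module.End ℂ (MvPolynomial (Fin 3) ℂ) :=
  (LinearMap.mulLeft ℂ (X 2 : MvPolynomial (Fin 3) ℂ)).comp (pderiv 0).toLinearMap
    - (LinearMap.mulLeft ℂ (X 0 : MvPolynomial (Fin 3) ℂ)).comp (pderiv 2).toLinearMap

/-- Directional derivative along `f₂ = (0, x₃, −x₂)`. -/
noncomputable def D2 : Module.End ℂ (MvPolynomial (Fin 3) ℂ) :=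
  (LinearMap.mulLeft ℂ (X 2 : MvPolynomial (Fin 3) ℂ)).comp (pderiv 1).toLinearMap
    - (LinearMap.mulLeft ℂ (X 1 : MvPolynomial (Fin 3) ℂ)).comp (pderiv 2).toLinearMap

/-- The Cartan element `h := 2i·D₀`. -/
noncomputable def hOp : Module.End ℂ (MvPolynomial (Fin 3) ℂ) := (2 * Complex.I) • D0

/-- The raising operator `e₊ := D₁ + i·D₂`. -/
noncomputable def ePlus : Module.End ℂ (MvPolynomial (Fin 3) ℂ) := D1 + Complex.I • D2

/-- The lowering operator `e₋ := −D₁ + i·D₂`. -/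
noncomputable def eMinus : Module.End ℂ (MvPolynomial (Fin 3) ℂ) := -D1 + Complex.I • D2


lemma aux_hwv (k m : ℕ) :
    ePlus (((X 0 ^ 2 + X 1 ^ 2 + X 2 ^ 2 : MvPolynomial (Fin 3) ℂ)) ^ k * (X 0 + Complex.I • X 1) ^ m) = 0 ∧
    hOp (((X 0 ^ 2 + X 1 ^ 2 + X 2 ^ 2 : MvPolynomial (Fin 3) ℂ)) ^ k * (X 0 + Complex.I • X 1) ^ m)
      = ((2 * m : ℕ) : ℂ) • (((X 0 ^ 2 + X 1 ^ 2 + X 2 ^ 2 : MvPolynomial (Fin 3) ℂ)) ^ k * (X 0 + Complex.I • X 1) ^ m) := by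
  have hI : (C Complex.I : MvPolynomial (Fin 3) ℂ) * C Complex.I = -1 := by
    rw [← C_mul, Complex.I_mul_I, map_neg, map_one]
  constructor
  · simp only [ePlus, D1, D2, LinearMap.add_apply, LinearMap.smul_apply, LinearMap.sub_apply,
      LinearMap.comp_apply, LinearMap.mulLeft_apply]
    simp only [smul_eq_C_mul]
    simp [Derivation.leibniz, Derivation.leibniz_pow, pderiv_X, Pi.single_apply, smul_eq_C_mul]
    linear_combination (X 2 * (m : MvPolynomial (Fin 3) ℂ) * (X 0 ^ 2 + X 1 ^ 2 + X 2 ^ 2) ^ k *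
      (X 0 + C Complex.I * X 1) ^ (m - 1)) * hI
  · cases m with
    | zero =>
      simp only [hOp, D0, LinearMap.smul_apply, LinearMap.sub_apply,
        LinearMap.comp_apply, LinearMap.mulLeft_apply]
      simp [Derivation.leibniz_pow, pderiv_X, Pi.single_apply, smul_eq_C_mul]
      ring
    | succ j =>
      simp only [hOp, D0, LinearMap.smul_apply, LinearMap.sub_apply,
        LinearMap.comp_apply, LinearMap.mulLeft_apply]
      simp only [smul_eq_C_mul]
      simp [Derivation.leibniz, Derivation.leibniz_pow, pderiv_X, Pi.single_apply, smul_eq_C_mul,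
        map_ofNat]
      linear_combination ((j : MvPolynomial (Fin 3) ℂ) + 1) * (X 0 ^ 2 + X 1 ^ 2 + X 2 ^ 2) ^ k *
        (X 0 + C Complex.I * X 1) ^ j * (-2 * X 0) * hI

/-- Highest weight vectors in `P_n`: `q_k = ‖x‖^{2k}(x₁+ix₂)^{n−2k}` is annihilated by
`e₊` and is an `h`-eigenvector of weight `2(n−2k)`. -/
theorem highest_weight_vectors (n : ℕ) (hn : 1 ≤ n) (k : ℕ) (hk : k ≤ n / 2) :
    ePlus ((X 0 ^ 2 + X 1 ^ 2 + X 2 ^ 2) ^ k * (X 0 + Complex.I • X 1) ^ (n - 2 * k)) = 0 ∧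
    hOp ((X 0 ^ 2 + X 1 ^ 2 + X 2 ^ 2) ^ k * (X 0 + Complex.I • X 1) ^ (n - 2 * k))
      = ((2 * (n - 2 * k) : ℕ) : ℂ) •
        ((X 0 ^ 2 + X 1 ^ 2 + X 2 ^ 2) ^ k * (X 0 + Complex.I • X 1) ^ (n - 2 * k)) := by
  exact aux_hwv k (n - 2 * k)
end

section
/- (Ladder relations for the weight vectors p_k.) Let n ≥ 1 and define p_k := e₋^k((x₁ + i·x₂)^n) for k = 0,…,2n. Then h p_k = (2n − 2k)·p_k for all 0 ≤ k ≤ 2n, e₊ p₀ = 0, and e₊ p_k = k·(2n − k + 1)·p_{k−1} for all 1 ≤ k ≤ 2n. -/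
open MvPolynomial

/-- The weight vectors `p_k := e₋^k ((x₁ + i·x₂)^n)`. -/
noncomputable def pvec (n k : ℕ) : MvPolynomial (Fin 3) ℂ :=
  (eMinus ^ k) ((X 0 + Complex.I • X 1) ^ n)

lemma pderiv_comm' {σ R : Type*} [CommSemiring R] [DecidableEq σ] (i j : σ) (p : MvPolynomial σ R) :
    pderiv i (pderiv j p) = pderiv j (pderiv i p) := by
  induction p using MvPolynomial.induction_on with
  | C a => simp
  | add p q hp hq => simp [hp, hq]
  | mul_X p k hp =>
    simp only [pderiv_mul, pderiv_X, map_add, hp, Pi.single_apply]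
    split_ifs <;> simp_all [pderiv_mul]

lemma brD01 (p : MvPolynomial (Fin 3) ℂ) : D0 (D1 p) = D1 (D0 p) + D2 p := by
  simp only [D0, D1, D2, LinearMap.sub_apply, LinearMap.comp_apply, LinearMap.mulLeft_apply,
    Derivation.coeFn_coe, map_add, map_sub, map_neg, pderiv_mul, pderiv_X_self,
    pderiv_X_of_ne (by decide : (1:Fin 3) ≠ 0), pderiv_X_of_ne (by decide : (0:Fin 3) ≠ 1),
    pderiv_X_of_ne (by decide : (2:Fin 3) ≠ 0), pderiv_X_of_ne (by decide : (0:Fin 3) ≠ 2),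
    pderiv_X_of_ne (by decide : (2:Fin 3) ≠ 1), pderiv_X_of_ne (by decide : (1:Fin 3) ≠ 2)]
  rw [pderiv_comm' 1 0 p, pderiv_comm' 2 0 p, pderiv_comm' 2 1 p]
  ring

lemma brD02 (p : MvPolynomial (Fin 3) ℂ) : D0 (D2 p) = D2 (D0 p) - D1 p := by
  simp only [D0, D1, D2, LinearMap.sub_apply, LinearMap.comp_apply, LinearMap.mulLeft_apply,
    Derivation.coeFn_coe, map_add, map_sub, map_neg, pderiv_mul, pderiv_X_self,
    pderiv_X_of_ne (by decide : (1:Fin 3) ≠ 0), pderiv_X_of_ne (by decide : (0:Fin 3) ≠ 1),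
    pderiv_X_of_ne (by decide : (2:Fin 3) ≠ 0), pderiv_X_of_ne (by decide : (0:Fin 3) ≠ 2),
    pderiv_X_of_ne (by decide : (2:Fin 3) ≠ 1), pderiv_X_of_ne (by decide : (1:Fin 3) ≠ 2)]
  rw [pderiv_comm' 1 0 p, pderiv_comm' 2 0 p, pderiv_comm' 2 1 p]
  ring

lemma brD12 (p : MvPolynomial (Fin 3) ℂ) : D1 (D2 p) = D2 (D1 p) + D0 p := by
  simp only [D0, D1, D2, LinearMap.sub_apply, LinearMap.comp_apply, LinearMap.mulLeft_apply,
    Derivation.coeFn_coe, map_add, map_sub, map_neg, pderiv_mul, pderiv_X_self,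
    pderiv_X_of_ne (by decide : (1:Fin 3) ≠ 0), pderiv_X_of_ne (by decide : (0:Fin 3) ≠ 1),
    pderiv_X_of_ne (by decide : (2:Fin 3) ≠ 0), pderiv_X_of_ne (by decide : (0:Fin 3) ≠ 2),
    pderiv_X_of_ne (by decide : (2:Fin 3) ≠ 1), pderiv_X_of_ne (by decide : (1:Fin 3) ≠ 2)]
  rw [pderiv_comm' 1 0 p, pderiv_comm' 2 0 p, pderiv_comm' 2 1 p]
  ring

lemma comm_h_eMinus (p : MvPolynomial (Fin 3) ℂ) :
    hOp (eMinus p) = eMinus (hOp p) - (2:ℂ) • eMinus p := by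
  simp only [hOp, eMinus, LinearMap.add_apply, LinearMap.neg_apply, LinearMap.smul_apply,
    map_add, map_neg, map_smul, brD01, brD02, brD12]
  match_scalars <;> (try ring_nf) <;> (try simp [Complex.I_sq]) <;> (try norm_num)

lemma comm_ePlus_eMinus (p : MvPolynomial (Fin 3) ℂ) :
    ePlus (eMinus p) = eMinus (ePlus p) + hOp p := by
  simp only [hOp, eMinus, ePlus, LinearMap.add_apply, LinearMap.neg_apply, LinearMap.smul_apply,
    map_add, map_neg, map_smul, brD01, brD02, brD12]
  match_scalars <;> (try ring_nf) <;> (try simp [Complex.I_sq]) <;> (try norm_num)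


lemma pvec_zero (n : ℕ) : pvec n 0 = (X 0 + Complex.I • X 1) ^ n := by
  simp [pvec]

lemma pvec_succ (n k : ℕ) : pvec n (k + 1) = eMinus (pvec n k) := by
  simp [pvec, pow_succ', Module.End.mul_apply]

lemma deriv_q (m : ℕ) :
    pderiv 0 (((X 0 + Complex.I • X 1 : MvPolynomial (Fin 3) ℂ)) ^ (m+1))
      = (m+1 : ℂ) • (X 0 + Complex.I • X 1) ^ m ∧
    pderiv 1 (((X 0 + Complex.I • X 1 : MvPolynomial (Fin 3) ℂ)) ^ (m+1))
      = ((m+1 : ℂ) * Complex.I) • (X 0 + Complex.I • X 1) ^ m ∧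
    pderiv 2 (((X 0 + Complex.I • X 1 : MvPolynomial (Fin 3) ℂ)) ^ (m+1))
      = 0 := by
  refine ⟨?_, ?_, ?_⟩ <;>
  · rw [pderiv_pow]
    simp [map_add, map_smul, pderiv_X_self,
      pderiv_X_of_ne (by decide : (1:Fin 3) ≠ 0), pderiv_X_of_ne (by decide : (0:Fin 3) ≠ 1),
      pderiv_X_of_ne (by decide : (0:Fin 3) ≠ 2), pderiv_X_of_ne (by decide : (1:Fin 3) ≠ 2),
      smul_eq_C_mul]
    try ring

lemma hJ : (C Complex.I : MvPolynomial (Fin 3) ℂ) * C Complex.I = -1 := by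
  rw [← C_mul, Complex.I_mul_I, map_neg, map_one]

lemma h_p0 (m : ℕ) : hOp (pvec (m+1) 0) = (2*((m:ℂ)+1)) • pvec (m+1) 0 := by
  rw [pvec_zero, hOp]
  simp only [LinearMap.smul_apply, D0, LinearMap.sub_apply, LinearMap.comp_apply,
    LinearMap.mulLeft_apply, Derivation.coeFn_coe, (deriv_q m).1, (deriv_q m).2.1]
  rw [pow_succ]
  simp only [smul_eq_C_mul, map_add, map_mul, map_one, map_ofNat]
  linear_combination (-(2:MvPolynomial (Fin 3) ℂ) * (C (m:ℂ) + 1) * (X 0 + C Complex.I * X 1) ^ m * X 0) * hJ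

lemma ePlus_p0 (m : ℕ) : ePlus (pvec (m+1) 0) = 0 := by
  rw [pvec_zero, ePlus]
  simp only [LinearMap.add_apply, LinearMap.smul_apply, D1, D2, LinearMap.sub_apply,
    LinearMap.comp_apply, LinearMap.mulLeft_apply, Derivation.coeFn_coe,
    (deriv_q m).1, (deriv_q m).2.1, (deriv_q m).2.2]
  simp only [smul_eq_C_mul, map_add, map_mul, map_one, mul_zero, sub_zero]
  linear_combination ((C (m:ℂ) + 1) * X 2 * (X 0 + C Complex.I * X 1) ^ m) * hJ

lemma h_pvec (n : ℕ) (hn : 1 ≤ n) (k : ℕ) :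
    hOp (pvec n k) = (2*(n:ℂ) - 2*(k:ℂ)) • pvec n k := by
  induction k with
  | zero =>
    obtain ⟨m, rfl⟩ : ∃ m, n = m + 1 := ⟨n - 1, (Nat.succ_pred_eq_of_pos hn).symm⟩
    rw [h_p0 m]
    congr 1
    push_cast
    ring
  | succ k ih =>
    rw [pvec_succ, comm_h_eMinus, ih, map_smul, ← pvec_succ, ← sub_smul]
    congr 1
    push_cast
    ring

lemma ePlus_pvec (n : ℕ) (hn : 1 ≤ n) : ∀ k, k ≤ 2*n →
    ePlus (pvec n k) = ((k:ℂ) * (2*(n:ℂ) - (k:ℂ) + 1)) • pvec n (k-1) := by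
  intro k
  induction k with
  | zero =>
    intro _
    obtain ⟨m, rfl⟩ : ∃ m, n = m + 1 := ⟨n - 1, (Nat.succ_pred_eq_of_pos hn).symm⟩
    simp [ePlus_p0 m]
  | succ k ih =>
    intro hk
    have hk' : k ≤ 2*n := le_trans (Nat.le_succ k) hk
    rw [pvec_succ, comm_ePlus_eMinus, ih hk', map_smul, h_pvec n hn k]
    cases k with
    | zero =>
      simp only [Nat.cast_zero, zero_mul, zero_smul, smul_zero, zero_add, Nat.cast_one]
      match_scalars
      ring
    | succ j =>
      rw [Nat.succ_sub_one, Nat.succ_sub_one, ← pvec_succ, ← add_smul]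
      congr 1
      push_cast
      ring

/-- Ladder relations for the weight vectors `p_k`. -/
theorem ladder_relations (n : ℕ) (hn : 1 ≤ n) :
    (∀ k : ℕ, k ≤ 2 * n →
      hOp (pvec n k) = (((2 * (n : ℤ) - 2 * (k : ℤ)) : ℤ) : ℂ) • pvec n k) ∧
    ePlus (pvec n 0) = 0 ∧
    (∀ k : ℕ, 1 ≤ k → k ≤ 2 * n →
      ePlus (pvec n k) = ((k * (2 * n - k + 1) : ℕ) : ℂ) • pvec n (k - 1)) := by
  refine ⟨fun k hk => ?_, ?_, fun k hk1 hk2 => ?_⟩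
  · rw [h_pvec n hn k]
    congr 1
    push_cast
    ring
  · obtain ⟨m, rfl⟩ : ∃ m, n = m + 1 := ⟨n - 1, (Nat.succ_pred_eq_of_pos hn).symm⟩
    exact ePlus_p0 m
  · rw [ePlus_pvec n hn k hk2]
    congr 1
    push_cast [Nat.cast_sub hk2]
    ring
end

section
/- (Invariance of the space of quadratic forms.) Let n ≥ 1 and let V ⊆ ℂ[x₁,x₂,x₃] be the ℂ-linear span of all products p·q where p and q range over polynomials that are homogeneous of degree n and satisfy Δp = Δq = 0. Then V is invariant under the rotational directional derivatives: for every v ∈ V and every i = 0,1,2, Dᵢ v ∈ V. -/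
open MvPolynomial

/-- The Laplace operator on `ℂ[x₁,x₂,x₃]`. -/
noncomputable def lap (p : MvPolynomial (Fin 3) ℂ) : MvPolynomial (Fin 3) ℂ :=
  pderiv 0 (pderiv 0 p) + pderiv 1 (pderiv 1 p) + pderiv 2 (pderiv 2 p)

/-! Each `Dᵢ` is the derivation `X b • ∂ₐ - X a • ∂_b` of a rotation vector field. It preserves
homogeneity of every degree and commutes with the Laplacian, since in
`Δ (X_j q) = 2 ∂_j q + X_j Δq` the terms `2 ∂_b ∂_a p` and `2 ∂_a ∂_b p` cancel; hence it maps the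
space `Hₙ` of harmonic forms of degree `n` into itself. The span in question is the submodule
product `Hₙ * Hₙ`, and by the Leibniz rule a derivation preserving both factors preserves it. -/

theorem Derivation.mapsTo_mul {R A : Type*} [CommSemiring R] [CommSemiring A] [Algebra R A]
    (D : Derivation R A A) {M N : Submodule R A} (hM : Set.MapsTo D M M)
    (hN : Set.MapsTo D N N) : Set.MapsTo D ↑(M * N) ↑(M * N) := by
  have hle : M * N ≤ (M * N).comap (D : A →ₗ[R] A) := Submodule.mul_le.2 fun m hm n hn => by
    rw [Submodule.mem_comap, Derivation.coeFn_coe, D.leibniz, smul_eq_mul, smul_eq_mul,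
      mul_comm n]
    exact add_mem (Submodule.mul_mem_mul hm (hN hn)) (Submodule.mul_mem_mul (hM hm) hn)
  exact fun _ hv => hle hv

namespace MvPolynomial

variable {R σ : Type*} [CommRing R]

theorem pderiv_pderiv_comm (i j : σ) (p : MvPolynomial σ R) :
    pderiv i (pderiv j p) = pderiv j (pderiv i p) := by
  have hcomm : ⁅pderiv i, pderiv j⁆ = (0 : Derivation R (MvPolynomial σ R) (MvPolynomial σ R)) :=
    derivation_ext fun k => by
      classical
      rw [Derivation.commutator_apply]
      simp [Pi.single_apply, apply_ite]
  have := congr($hcomm p)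
  rwa [Derivation.commutator_apply, Derivation.zero_apply, sub_eq_zero] at this

variable (a b : σ)

noncomputable def rotationDerivation : Derivation R (MvPolynomial σ R) (MvPolynomial σ R) :=
  (X b : MvPolynomial σ R) • pderiv a - (X a : MvPolynomial σ R) • pderiv b

theorem rotationDerivation_apply (p : MvPolynomial σ R) :
    rotationDerivation a b p = X b * pderiv a p - X a * pderiv b p := rfl

theorem IsHomogeneous.X_mul_pderiv {p : MvPolynomial σ R} {n : ℕ} (hp : p.IsHomogeneous n) :
    (X b * pderiv a p).IsHomogeneous n := by
  obtain _ | n := n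
  · rw [← totalDegree_zero_iff_isHomogeneous, totalDegree_eq_zero_iff_eq_C] at hp
    rw [hp, pderiv_C, mul_zero]
    exact isHomogeneous_zero _ _ _
  · simpa [add_comm] using (isHomogeneous_X R b).mul hp.pderiv

theorem IsHomogeneous.rotationDerivation {p : MvPolynomial σ R} {n : ℕ}
    (hp : p.IsHomogeneous n) : (rotationDerivation a b p).IsHomogeneous n :=
  (hp.X_mul_pderiv a b).sub (hp.X_mul_pderiv b a)

variable [Fintype σ]

noncomputable def laplacian : MvPolynomial σ R →ₗ[R] MvPolynomial σ R :=
  ∑ i, (pderiv i).toLinearMap ∘ₗ (pderiv i).toLinearMap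

theorem laplacian_apply (p : MvPolynomial σ R) :
    laplacian p = ∑ i, pderiv i (pderiv i p) := by
  simp [laplacian]

theorem laplacian_pderiv (p : MvPolynomial σ R) :
    laplacian (pderiv a p) = pderiv a (laplacian p) := by
  simp only [laplacian_apply, map_sum, pderiv_pderiv_comm a]

theorem laplacian_X_mul (p : MvPolynomial σ R) :
    laplacian (X a * p) = 2 * pderiv a p + X a * laplacian p := by
  classical
  have hterm (i : σ) : pderiv i (pderiv i (X a * p)) =
      X a * pderiv i (pderiv i p) + if i = a then 2 * pderiv a p else 0 := by
    by_cases hia : i = a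
    · subst hia
      simp only [Derivation.leibniz, pderiv_X_self, smul_eq_mul, mul_one, map_add, if_true]
      ring
    · simp [Derivation.leibniz, pderiv_X_of_ne (Ne.symm hia), hia]
  simp only [laplacian_apply, hterm, Finset.sum_add_distrib, Finset.mul_sum, Finset.sum_ite_eq',
    Finset.mem_univ, if_true]
  ring

theorem laplacian_rotationDerivation (p : MvPolynomial σ R) :
    laplacian (rotationDerivation a b p) = rotationDerivation a b (laplacian p) := by
  rw [rotationDerivation_apply, rotationDerivation_apply, map_sub, laplacian_X_mul,
    laplacian_X_mul, laplacian_pderiv, laplacian_pderiv, pderiv_pderiv_comm b a]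
  ring

end MvPolynomial

namespace MvPolynomial

variable (σ R : Type*) [CommRing R] [Fintype σ]

noncomputable def homogeneousHarmonicSubmodule (n : ℕ) : Submodule R (MvPolynomial σ R) :=
  homogeneousSubmodule σ R n ⊓ LinearMap.ker laplacian

variable {σ R}

theorem mapsTo_rotationDerivation_homogeneousHarmonicSubmodule (a b : σ) (n : ℕ) :
    Set.MapsTo (rotationDerivation (R := R) a b) ↑(homogeneousHarmonicSubmodule σ R n)
      ↑(homogeneousHarmonicSubmodule σ R n) := by
  rintro p ⟨hp, hlap⟩
  refine ⟨(mem_homogeneousSubmodule _ _).2 (hp.rotationDerivation a b), ?_⟩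
  rw [SetLike.mem_coe, LinearMap.mem_ker] at hlap ⊢
  rw [laplacian_rotationDerivation, hlap, map_zero]

end MvPolynomial

theorem lap_eq_laplacian (p : MvPolynomial (Fin 3) ℂ) : lap p = laplacian p := by
  rw [lap, laplacian_apply, Fin.sum_univ_three]

theorem quadratic_span_invariant_general (n : ℕ) :
    ∀ v ∈ Submodule.span ℂ {r : MvPolynomial (Fin 3) ℂ |
        ∃ p q : MvPolynomial (Fin 3) ℂ, p.IsHomogeneous n ∧ lap p = 0 ∧
          q.IsHomogeneous n ∧ lap q = 0 ∧ r = p * q},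
      D0 v ∈ Submodule.span ℂ {r : MvPolynomial (Fin 3) ℂ |
        ∃ p q : MvPolynomial (Fin 3) ℂ, p.IsHomogeneous n ∧ lap p = 0 ∧
          q.IsHomogeneous n ∧ lap q = 0 ∧ r = p * q} ∧
      D1 v ∈ Submodule.span ℂ {r : MvPolynomial (Fin 3) ℂ |
        ∃ p q : MvPolynomial (Fin 3) ℂ, p.IsHomogeneous n ∧ lap p = 0 ∧
          q.IsHomogeneous n ∧ lap q = 0 ∧ r = p * q} ∧
      D2 v ∈ Submodule.span ℂ {r : MvPolynomial (Fin 3) ℂ |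
        ∃ p q : MvPolynomial (Fin 3) ℂ, p.IsHomogeneous n ∧ lap p = 0 ∧
          q.IsHomogeneous n ∧ lap q = 0 ∧ r = p * q} := by
  set H := homogeneousHarmonicSubmodule (Fin 3) ℂ n
  have hV : Submodule.span ℂ {r : MvPolynomial (Fin 3) ℂ |
      ∃ p q : MvPolynomial (Fin 3) ℂ, p.IsHomogeneous n ∧ lap p = 0 ∧
        q.IsHomogeneous n ∧ lap q = 0 ∧ r = p * q} = H * H := by
    rw [Submodule.mul_eq_span_mul_set]
    congr 1
    ext r
    simp [H, homogeneousHarmonicSubmodule, Set.mem_mul, lap_eq_laplacian, and_assoc, eq_comm]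
  have hD (a b : Fin 3) := (rotationDerivation (R := ℂ) a b).mapsTo_mul
    (mapsTo_rotationDerivation_homogeneousHarmonicSubmodule a b n)
    (mapsTo_rotationDerivation_homogeneousHarmonicSubmodule a b n)
  rw [hV]
  -- `D0`, `D1`, `D2` are `rotationDerivation 0 1`, `0 2`, `1 2` by definition.
  exact fun v hv => ⟨hD 0 1 hv, hD 0 2 hv, hD 1 2 hv⟩

/-- The span of products of two harmonic homogeneous polynomials of degree `n` is
invariant under the rotational directional derivatives `D₀, D₁, D₂`. -/
theorem quadratic_span_invariant (n : ℕ) (hn : 1 ≤ n) :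
    ∀ v ∈ Submodule.span ℂ {r : MvPolynomial (Fin 3) ℂ |
        ∃ p q : MvPolynomial (Fin 3) ℂ, p.IsHomogeneous n ∧ lap p = 0 ∧
          q.IsHomogeneous n ∧ lap q = 0 ∧ r = p * q},
      D0 v ∈ Submodule.span ℂ {r : MvPolynomial (Fin 3) ℂ |
        ∃ p q : MvPolynomial (Fin 3) ℂ, p.IsHomogeneous n ∧ lap p = 0 ∧
          q.IsHomogeneous n ∧ lap q = 0 ∧ r = p * q} ∧
      D1 v ∈ Submodule.span ℂ {r : MvPolynomial (Fin 3) ℂ |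
        ∃ p q : MvPolynomial (Fin 3) ℂ, p.IsHomogeneous n ∧ lap p = 0 ∧
          q.IsHomogeneous n ∧ lap q = 0 ∧ r = p * q} ∧
      D2 v ∈ Submodule.span ℂ {r : MvPolynomial (Fin 3) ℂ |
        ∃ p q : MvPolynomial (Fin 3) ℂ, p.IsHomogeneous n ∧ lap p = 0 ∧
          q.IsHomogeneous n ∧ lap q = 0 ∧ r = p * q} :=
  quadratic_span_invariant_general n
end
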